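/- arXiv:1909.06725 — 3 statements merged into one kernel-verified Lean document; each statement's English description precedes it below -/
import Mathlib

section
/- The ring O_E of Laurent series over O_L whose coefficients tend to 0 at -∞ is a discrete valuation ring whose maximal ideal is generated by a uniformizer π_L of L. -/
/-!
The Gauss norm `‖a‖ = sup ‖aₙ‖` on `O_E` is multiplicative: the coefficient of `a * b` at the sum
of the first indices where `a` and `b` attain their Gauss norms has norm `‖a‖ * ‖b‖`, because
discreteness turns the strict inequality before those indices into a factor `‖π_L‖`. Hence `O_E`
is a domain and its units are exactly the elements of Gauss norm `1`: after shifting and scaling,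
such an element has coefficient `1` at `0` and small coefficients at negative indices, so it is a
power series with unit constant term times `1 - y` with `‖y‖ < 1`, and both factors are inverted
by geometric series. Dividing the coefficients of `a ≠ 0` by `π_L ^ k`, where `‖a‖ = ‖π_L‖ ^ k`,
writes `a` as `π_L ^ k` times a unit, so `π_L` is a uniformizer.
-/

open Filter

/-- The carrier of the ring `O_E`: Laurent series with coefficients in the ring of
integers of `L` tending to `0` at `-∞`. -/
def OECarrier (L : Type*) [NormedField L] : Type _ :=
  {a : ℤ → L // (∀ n, ‖a n‖ ≤ 1) ∧ Tendsto (fun n => ‖a n‖) atBot (nhds 0)}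

open Topology IsUltrametricDist

structure IsNormUniformizer {L : Type*} [NormedField L] (π : L) : Prop where
  ne_zero : π ≠ 0
  norm_lt_one : ‖π‖ < 1
  exists_eq_mul_zpow (x : L) : x ≠ 0 → ∃ (n : ℤ) (u : L), ‖u‖ = 1 ∧ x = u * π ^ n

namespace IsNormUniformizer

variable {L : Type*} [NormedField L] {π : L} (hπ : IsNormUniformizer π)
include hπ

lemma norm_pos : 0 < ‖π‖ := norm_pos_iff.2 hπ.ne_zero

lemma exists_norm_eq_zpow {x : L} (hx : x ≠ 0) : ∃ n : ℤ, ‖x‖ = ‖π‖ ^ n := by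
  obtain ⟨n, u, hu, rfl⟩ := hπ.exists_eq_mul_zpow x hx
  exact ⟨n, by rw [norm_mul, hu, one_mul, norm_zpow]⟩

lemma exists_norm_eq_pow {x : L} (hx : x ≠ 0) (hx1 : ‖x‖ ≤ 1) : ∃ k : ℕ, ‖x‖ = ‖π‖ ^ k := by
  obtain ⟨n, hn⟩ := hπ.exists_norm_eq_zpow hx
  have hn0 : 0 ≤ n :=
    (zpow_le_one_iff_right_of_lt_one₀ hπ.norm_pos hπ.norm_lt_one).1 (hn ▸ hx1)
  exact ⟨n.toNat, by rw [hn, ← zpow_natCast, Int.toNat_of_nonneg hn0]⟩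

lemma norm_le_mul_of_norm_lt {x y : L} (h : ‖x‖ < ‖y‖) : ‖x‖ ≤ ‖π‖ * ‖y‖ := by
  rcases eq_or_ne x 0 with rfl | hx
  · rw [norm_zero]
    exact mul_nonneg (norm_nonneg _) (norm_nonneg _)
  have hy : y ≠ 0 := norm_pos_iff.1 ((norm_nonneg x).trans_lt h)
  obtain ⟨m, hm⟩ := hπ.exists_norm_eq_zpow hx
  obtain ⟨n, hn⟩ := hπ.exists_norm_eq_zpow hy
  rw [hm, hn] at h ⊢
  have hnm : n < m := (zpow_lt_zpow_iff_right_of_lt_one₀ hπ.norm_pos hπ.norm_lt_one).1 h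
  rw [← zpow_one_add₀ hπ.norm_pos.ne']
  exact zpow_le_zpow_right_of_le_one₀ hπ.norm_pos hπ.norm_lt_one.le (by omega)

end IsNormUniformizer

/-- The ring structure on `OECarrier L` is an arbitrary `CommRing` instance; this class says that
it is the coefficientwise addition and the convolution product of `O_E`. -/
class IsConvolutionRing (L : Type*) [NormedField L] [CommRing (OECarrier L)] : Prop where
  coeff_add (a b : OECarrier L) (n : ℤ) : (a + b).1 n = a.1 n + b.1 n
  coeff_mul (a b : OECarrier L) (n : ℤ) : (a * b).1 n = ∑' i : ℤ, a.1 i * b.1 (n - i)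

namespace OECarrier

open IsConvolutionRing

variable {L : Type*} [NormedField L]

lemma ext {a b : OECarrier L} (h : ∀ n, a.1 n = b.1 n) : a = b := Subtype.ext (funext h)

lemma norm_coeff_le_one (a : OECarrier L) (n : ℤ) : ‖a.1 n‖ ≤ 1 := a.2.1 n

def ofEventuallyZero (f : ℤ → L) (hf : ∀ n, ‖f n‖ ≤ 1) (h0 : ∀ᶠ n in atBot, f n = 0) :
    OECarrier L :=
  ⟨f, hf, tendsto_const_nhds.congr' (h0.mono fun n hn => by simp [hn])⟩

def monomial (k : ℤ) (c : L) (hc : ‖c‖ ≤ 1) : OECarrier L :=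
  ofEventuallyZero (fun n => if n = k then c else 0) (fun n => by split_ifs <;> simp [hc])
    ((eventually_lt_atBot k).mono fun _ hn => if_neg hn.ne)

lemma coeff_monomial (k : ℤ) (c : L) (hc : ‖c‖ ≤ 1) (n : ℤ) :
    (monomial k c hc).1 n = if n = k then c else 0 := rfl

noncomputable def gaussNorm (a : OECarrier L) : ℝ := ⨆ n, ‖a.1 n‖

lemma norm_coeff_le_gaussNorm (a : OECarrier L) (n : ℤ) : ‖a.1 n‖ ≤ gaussNorm a :=
  le_ciSup ⟨1, Set.forall_mem_range.2 a.2.1⟩ n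

lemma gaussNorm_le {a : OECarrier L} {r : ℝ} (h : ∀ n, ‖a.1 n‖ ≤ r) : gaussNorm a ≤ r :=
  ciSup_le h

lemma gaussNorm_nonneg (a : OECarrier L) : 0 ≤ gaussNorm a :=
  (norm_nonneg _).trans (norm_coeff_le_gaussNorm a 0)

lemma gaussNorm_le_one (a : OECarrier L) : gaussNorm a ≤ 1 := gaussNorm_le a.2.1

lemma summable_coeff_mul_coeff [IsUltrametricDist L] [CompleteSpace L] (a b : OECarrier L)
    (n : ℤ) :
    Summable fun i => a.1 i * b.1 (n - i) := by
  refine NonarchimedeanAddGroup.summable_of_tendsto_cofinite_zero ?_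
  rw [Int.cofinite_eq, tendsto_sup]
  constructor
  · refine squeeze_zero_norm (fun i => ?_) a.2.2
    rw [norm_mul]
    exact mul_le_of_le_one_right (norm_nonneg _) (b.norm_coeff_le_one _)
  · have hsub : Tendsto (fun i : ℤ => n - i) atTop atBot :=
      tendsto_atBot_add_const_left atTop n tendsto_neg_atTop_atBot
    refine squeeze_zero_norm (fun i => ?_) (b.2.2.comp hsub)
    rw [norm_mul]
    exact mul_le_of_le_one_left (norm_nonneg _) (a.norm_coeff_le_one _)

section Ring

variable [CommRing (OECarrier L)] [IsConvolutionRing L]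

def coeffHom (n : ℤ) : OECarrier L →+ L :=
  AddMonoidHom.mk' (fun a => a.1 n) fun a b => coeff_add a b n

lemma coeff_zero (n : ℤ) : (0 : OECarrier L).1 n = 0 := map_zero (coeffHom n)

lemma coeff_neg (a : OECarrier L) (n : ℤ) : (-a).1 n = -a.1 n := map_neg (coeffHom n) a

lemma coeff_sub (a b : OECarrier L) (n : ℤ) : (a - b).1 n = a.1 n - b.1 n :=
  map_sub (coeffHom n) a b

lemma coeff_sum {ι : Type*} (s : Finset ι) (f : ι → OECarrier L) (n : ℤ) :
    (∑ i ∈ s, f i).1 n = ∑ i ∈ s, (f i).1 n :=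
  map_sum (coeffHom n) f s

lemma coeff_monomial_mul (k : ℤ) (c : L) (hc : ‖c‖ ≤ 1) (a : OECarrier L) (n : ℤ) :
    (monomial k c hc * a).1 n = c * a.1 (n - k) := by
  rw [coeff_mul, tsum_eq_single k fun i hi => by rw [coeff_monomial, if_neg hi, zero_mul],
    coeff_monomial, if_pos rfl]

lemma coeff_one (n : ℤ) : (1 : OECarrier L).1 n = if n = 0 then 1 else 0 := by
  have h := coeff_mul 1 (monomial 0 (1 : L) norm_one.le) n
  rw [one_mul, tsum_eq_single n fun i hi => by
    rw [coeff_monomial, if_neg (sub_ne_zero.2 (Ne.symm hi)), mul_zero]] at h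
  rw [sub_self, coeff_monomial, coeff_monomial, if_pos rfl, mul_one] at h
  exact h.symm

lemma coeff_monomial_zero_pow_mul (c : L) (hc : ‖c‖ ≤ 1) (k : ℕ) (a : OECarrier L) (n : ℤ) :
    (monomial 0 c hc ^ k * a).1 n = c ^ k * a.1 n := by
  induction k generalizing a with
  | zero => rw [pow_zero, pow_zero, one_mul, one_mul]
  | succ k ih => rw [pow_succ, mul_assoc, ih, coeff_monomial_mul, sub_zero, pow_succ, mul_assoc]

lemma coeff_mul_eq_zero_of_lt {a b : OECarrier L} {p q n : ℤ} (ha : ∀ i < p, a.1 i = 0)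
    (hb : ∀ j < q, b.1 j = 0) (hn : n < p + q) : (a * b).1 n = 0 := by
  rw [coeff_mul]
  refine (tsum_congr fun i => ?_).trans tsum_zero
  rcases lt_or_ge i p with hi | hi
  · rw [ha i hi, zero_mul]
  · rw [hb (n - i) (by omega), mul_zero]

lemma exists_coeff_ne_zero {a : OECarrier L} (ha : a ≠ 0) : ∃ n, a.1 n ≠ 0 := by
  by_contra! h
  exact ha (ext fun n => by rw [h, coeff_zero])

lemma gaussNorm_zero : gaussNorm (0 : OECarrier L) = 0 :=
  le_antisymm (gaussNorm_le fun n => by rw [coeff_zero, norm_zero]) (gaussNorm_nonneg 0)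

lemma gaussNorm_pos {a : OECarrier L} (ha : a ≠ 0) : 0 < gaussNorm a := by
  obtain ⟨n, hn⟩ := exists_coeff_ne_zero ha
  exact (norm_pos_iff.2 hn).trans_le (norm_coeff_le_gaussNorm a n)

lemma gaussNorm_one : gaussNorm (1 : OECarrier L) = 1 := by
  refine le_antisymm (gaussNorm_le_one 1) ?_
  simpa [coeff_one] using norm_coeff_le_gaussNorm (1 : OECarrier L) 0

lemma coeff_pow_eq_zero_of_lt {t : OECarrier L} (ht : ∀ n ≤ 0, t.1 n = 0) (m : ℕ) {n : ℤ}
    (hn : n < m) : (t ^ m).1 n = 0 := by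
  induction m generalizing n with
  | zero => rw [pow_zero, coeff_one, if_neg (by omega)]
  | succ m ih =>
    rw [pow_succ']
    exact coeff_mul_eq_zero_of_lt (p := 1) (fun i hi => ht i (by omega)) (fun j => ih) (by omega)

lemma isUnit_one_sub_of_coeff_eq_zero {t : OECarrier L} (ht : ∀ n ≤ 0, t.1 n = 0) :
    IsUnit (1 - t) := by
  have hpow := coeff_pow_eq_zero_of_lt ht
  let s (M : ℕ) : OECarrier L := ∑ m ∈ Finset.range M, t ^ m
  have hstable (M : ℕ) (n : ℤ) (hn : n.toNat < M) : (s M).1 n = (s (n.toNat + 1)).1 n := by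
    simp only [s, coeff_sum]
    exact Finset.eventually_constant_sum (fun m hm => hpow m (by omega)) (by omega)
  -- `w = ∑ tᵐ`, whose coefficient at `n` only involves the powers `tᵐ` with `m ≤ n`.
  let w : OECarrier L := ofEventuallyZero (fun n => (s (n.toNat + 1)).1 n)
    (fun n => norm_coeff_le_one _ n) ((eventually_lt_atBot 0).mono fun n hn => by
      simp only [s, Int.toNat_eq_zero.2 hn.le, zero_add, Finset.sum_range_one]
      exact hpow 0 hn)
  refine IsUnit.of_mul_eq_one w (ext fun n => ?_)
  have h1t : ∀ i < 0, (1 - t).1 i = 0 := fun i hi => by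
    rw [coeff_sub, coeff_one, if_neg hi.ne, ht i hi.le, sub_zero]
  have hws : ∀ k < ((n.toNat + 1 : ℕ) : ℤ), (w - s (n.toNat + 1)).1 k = 0 := fun k hk => by
    rw [coeff_sub, sub_eq_zero]
    exact (hstable _ k (by omega)).symm
  have hsplit : (1 - t) * w = (1 - t) * (w - s (n.toNat + 1)) + (1 - t ^ (n.toNat + 1)) := by
    rw [← mul_neg_geom_sum]; ring
  rw [hsplit, coeff_add, coeff_mul_eq_zero_of_lt h1t hws (by omega), coeff_sub,
    hpow _ (by omega), zero_add, sub_zero]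

section Uniformizer

variable {π : L} (hπ : IsNormUniformizer π)
include hπ

lemma exists_norm_coeff_eq_gaussNorm {a : OECarrier L} (ha : a ≠ 0) :
    ∃ N, ‖a.1 N‖ = gaussNorm a := by
  classical
  obtain ⟨n₀, hn₀⟩ := exists_coeff_ne_zero ha
  have hex : ∃ k : ℕ, ∃ n, ‖a.1 n‖ = ‖π‖ ^ k :=
    (hπ.exists_norm_eq_pow hn₀ (a.norm_coeff_le_one n₀)).imp fun _ hk => ⟨n₀, hk⟩
  obtain ⟨N, hN⟩ := Nat.find_spec hex
  refine ⟨N, le_antisymm (norm_coeff_le_gaussNorm a N) (gaussNorm_le fun n => ?_)⟩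
  rcases eq_or_ne (a.1 n) 0 with h | h
  · rw [h, norm_zero]
    exact norm_nonneg _
  obtain ⟨k, hk⟩ := hπ.exists_norm_eq_pow h (a.norm_coeff_le_one n)
  rw [hk, hN]
  exact pow_le_pow_of_le_one hπ.norm_pos.le hπ.norm_lt_one.le (Nat.find_min' hex ⟨n, hk⟩)

lemma exists_leading_coeff {a : OECarrier L} (ha : a ≠ 0) :
    ∃ N, ‖a.1 N‖ = gaussNorm a ∧ ∀ n < N, ‖a.1 n‖ ≤ ‖π‖ * gaussNorm a := by
  obtain ⟨N₀, hN₀⟩ := exists_norm_coeff_eq_gaussNorm hπ ha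
  obtain ⟨B, hB⟩ := eventually_atBot.1 (a.2.2.eventually (gt_mem_nhds (gaussNorm_pos ha)))
  obtain ⟨N, hN, hmin⟩ := Int.exists_least_of_bdd
    ⟨B, fun n hn => by by_contra! h; exact (hB n h.le).ne hn⟩ ⟨N₀, hN₀⟩
  refine ⟨N, hN, fun n hn => ?_⟩
  rw [← hN]
  refine hπ.norm_le_mul_of_norm_lt (lt_of_le_of_ne (hN ▸ norm_coeff_le_gaussNorm a n) fun h => ?_)
  exact absurd (hmin n (h.trans hN)) (not_le.2 hn)

lemma gaussNorm_le_of_lt_one {a : OECarrier L} (ha : gaussNorm a < 1) : gaussNorm a ≤ ‖π‖ := by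
  rcases eq_or_ne a 0 with rfl | ha0
  · rw [gaussNorm_zero]
    exact norm_nonneg π
  obtain ⟨N, hN⟩ := exists_norm_coeff_eq_gaussNorm hπ ha0
  simpa [hN] using hπ.norm_le_mul_of_norm_lt (x := a.1 N) (y := 1) (by rwa [norm_one, hN])

end Uniformizer

section Ultrametric

variable [IsUltrametricDist L]

lemma norm_coeff_mul_le (a b : OECarrier L) (n : ℤ) :
    ‖(a * b).1 n‖ ≤ gaussNorm a * gaussNorm b := by
  rw [coeff_mul]
  refine norm_tsum_le_of_forall_le_of_nonneg
    (mul_nonneg (gaussNorm_nonneg a) (gaussNorm_nonneg b)) fun i => ?_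
  rw [norm_mul]
  exact mul_le_mul (norm_coeff_le_gaussNorm a i) (norm_coeff_le_gaussNorm b _) (norm_nonneg _)
    (gaussNorm_nonneg a)

lemma gaussNorm_mul_le (a b : OECarrier L) : gaussNorm (a * b) ≤ gaussNorm a * gaussNorm b :=
  gaussNorm_le (norm_coeff_mul_le a b)

lemma gaussNorm_pow_le (a : OECarrier L) (m : ℕ) : gaussNorm (a ^ m) ≤ gaussNorm a ^ m := by
  induction m with
  | zero => rw [pow_zero, pow_zero]; exact gaussNorm_le_one 1
  | succ m ih =>
    rw [pow_succ, pow_succ]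
    exact (gaussNorm_mul_le _ _).trans
      (mul_le_mul_of_nonneg_right ih (gaussNorm_nonneg a))

variable [CompleteSpace L]

lemma exists_norm_coeff_sub_geom_sum_le {t : OECarrier L} (ht : gaussNorm t < 1) :
    ∃ w : OECarrier L, ∀ (M : ℕ) (n : ℤ),
      ‖w.1 n - (∑ m ∈ Finset.range M, t ^ m).1 n‖ ≤ gaussNorm t ^ M := by
  set r := gaussNorm t
  have hr0 : 0 ≤ r := gaussNorm_nonneg t
  have hpow (m : ℕ) (n : ℤ) : ‖(t ^ m).1 n‖ ≤ r ^ m :=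
    (norm_coeff_le_gaussNorm _ n).trans (gaussNorm_pow_le t m)
  have hsum (n : ℤ) : Summable fun m : ℕ => (t ^ m).1 n :=
    NonarchimedeanAddGroup.summable_of_tendsto_cofinite_zero <| by
      rw [Nat.cofinite_eq_atTop]
      exact squeeze_zero_norm (hpow · n) (tendsto_pow_atTop_nhds_zero_of_lt_one hr0 ht)
  have htail (M : ℕ) (n : ℤ) :
      ‖∑' m, (t ^ m).1 n - (∑ m ∈ Finset.range M, t ^ m).1 n‖ ≤ r ^ M := by
    rw [coeff_sum, ← (hsum n).sum_add_tsum_nat_add M, add_sub_cancel_left]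
    exact norm_tsum_le_of_forall_le_of_nonneg (pow_nonneg hr0 M) fun m =>
      (hpow _ n).trans (pow_le_pow_of_le_one hr0 ht.le (by omega))
  have hdecay : Tendsto (fun n => ‖∑' m, (t ^ m).1 n‖) atBot (𝓝 0) := by
    refine tendsto_order.2 ⟨fun ε hε => .of_forall fun n => hε.trans_le (norm_nonneg _),
      fun ε hε => ?_⟩
    obtain ⟨M, hM⟩ := exists_pow_lt_of_lt_one hε ht
    filter_upwards [(∑ m ∈ Finset.range M, t ^ m).2.2.eventually (gt_mem_nhds hε)] with n hn
    rw [← add_sub_cancel ((∑ m ∈ Finset.range M, t ^ m).1 n) (∑' m, (t ^ m).1 n)]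
    exact (norm_add_le_max _ _).trans_lt (max_lt hn ((htail M n).trans_lt hM))
  exact ⟨⟨fun n => ∑' m, (t ^ m).1 n, fun n => norm_tsum_le_of_forall_le_of_nonneg zero_le_one
    fun m => norm_coeff_le_one _ n, hdecay⟩, htail⟩

lemma isUnit_one_sub_of_gaussNorm_lt_one {t : OECarrier L} (ht : gaussNorm t < 1) :
    IsUnit (1 - t) := by
  obtain ⟨w, hw⟩ := exists_norm_coeff_sub_geom_sum_le ht
  refine IsUnit.of_mul_eq_one w (ext fun n => sub_eq_zero.1 (norm_le_zero_iff.1 ?_))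
  refine ge_of_tendsto' (tendsto_pow_atTop_nhds_zero_of_lt_one (gaussNorm_nonneg t) ht)
    fun M => ?_
  set s := ∑ m ∈ Finset.range M, t ^ m
  have hsplit : (1 - t) * w - 1 = (1 - t) * (w - s) + -t ^ M := by
    rw [← sub_eq_add_neg, ← sub_add_cancel w s, mul_add, mul_neg_geom_sum]; ring
  rw [← coeff_sub, hsplit, coeff_add, coeff_neg]
  refine (norm_add_le_max _ _).trans (max_le ?_ ?_)
  · calc ‖((1 - t) * (w - s)).1 n‖ ≤ gaussNorm (1 - t) * gaussNorm (w - s) :=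
          norm_coeff_mul_le _ _ n
      _ ≤ 1 * gaussNorm t ^ M := mul_le_mul (gaussNorm_le_one _)
          (gaussNorm_le fun k => (coeff_sub w s k).symm ▸ hw M k) (gaussNorm_nonneg _) zero_le_one
      _ = gaussNorm t ^ M := one_mul _
  · rw [norm_neg]
    exact (norm_coeff_le_gaussNorm _ n).trans (gaussNorm_pow_le t M)

lemma isUnit_of_coeff_zero_eq_one {b : OECarrier L} {r : ℝ} (hr : r < 1) (hb0 : b.1 0 = 1)
    (hneg : ∀ n < 0, ‖b.1 n‖ ≤ r) : IsUnit b := by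
  have hr0 : 0 ≤ r := (norm_nonneg _).trans (hneg (-1) (by omega))
  let u : OECarrier L := ofEventuallyZero (fun n => if 0 ≤ n then b.1 n else 0)
    (fun n => by split_ifs <;> simp [norm_coeff_le_one])
    ((eventually_lt_atBot 0).mono fun n hn => if_neg (not_le.2 hn))
  have hu : IsUnit u := by
    rw [← sub_sub_cancel 1 u]
    refine isUnit_one_sub_of_coeff_eq_zero fun n hn => ?_
    rw [coeff_sub, coeff_one]
    rcases hn.lt_or_eq with hn | rfl
    · rw [if_neg hn.ne, sub_eq_zero]
      exact (if_neg (not_le.2 hn)).symm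
    · rw [if_pos rfl, sub_eq_zero]
      exact hb0.symm
  obtain ⟨v, hv⟩ := hu.exists_right_inv
  have hub : gaussNorm (u - b) ≤ r := gaussNorm_le fun n => by
    rw [coeff_sub]
    by_cases hn : 0 ≤ n
    · simp [u, ofEventuallyZero, hn, hr0]
    · simpa [u, ofEventuallyZero, hn] using hneg n (not_le.1 hn)
  have hsmall : gaussNorm (v * (u - b)) < 1 := calc
    gaussNorm (v * (u - b)) ≤ 1 * r :=
      (gaussNorm_mul_le _ _).trans (mul_le_mul (gaussNorm_le_one v) hub (gaussNorm_nonneg _)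
        zero_le_one)
    _ < 1 := by rwa [one_mul]
  have hfac : b = u * (1 - v * (u - b)) := by linear_combination (u - b) * hv
  rw [hfac]
  exact hu.mul (isUnit_one_sub_of_gaussNorm_lt_one hsmall)

lemma norm_coeff_mul_add_eq {a b : OECarrier L} {r : ℝ} (hr0 : 0 ≤ r) (hr : r < 1) {N M : ℤ}
    (haN : ‖a.1 N‖ = gaussNorm a) (ha : ∀ n < N, ‖a.1 n‖ ≤ r * gaussNorm a)
    (hbM : ‖b.1 M‖ = gaussNorm b) (hb : ∀ n < M, ‖b.1 n‖ ≤ r * gaussNorm b)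
    (hpos : 0 < gaussNorm a * gaussNorm b) :
    ‖(a * b).1 (N + M)‖ = gaussNorm a * gaussNorm b := by
  classical
  set f : ℤ → L := fun i => a.1 i * b.1 (N + M - i)
  have hfN : ‖f N‖ = gaussNorm a * gaussNorm b := by
    simp only [f, norm_mul, haN, add_sub_cancel_left, hbM]
  have hrest (i : ℤ) : ‖if i = N then 0 else f i‖ ≤ r * (gaussNorm a * gaussNorm b) := by
    split_ifs with hi
    · rw [norm_zero]
      exact mul_nonneg hr0 hpos.le
    rw [norm_mul]
    rcases lt_or_gt_of_ne hi with hi | hi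
    · calc ‖a.1 i‖ * ‖b.1 (N + M - i)‖ ≤ r * gaussNorm a * gaussNorm b :=
            mul_le_mul (ha i hi) (norm_coeff_le_gaussNorm b _) (norm_nonneg _)
              (mul_nonneg hr0 (gaussNorm_nonneg a))
        _ = r * (gaussNorm a * gaussNorm b) := mul_assoc _ _ _
    · calc ‖a.1 i‖ * ‖b.1 (N + M - i)‖ ≤ gaussNorm a * (r * gaussNorm b) :=
            mul_le_mul (norm_coeff_le_gaussNorm a i) (hb _ (by omega)) (norm_nonneg _)
              (gaussNorm_nonneg a)
        _ = r * (gaussNorm a * gaussNorm b) := by ring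
  have hlt : ‖∑' i, if i = N then 0 else f i‖ < ‖f N‖ := by
    rw [hfN]
    exact (norm_tsum_le_of_forall_le_of_nonneg (mul_nonneg hr0 hpos.le) hrest).trans_lt
      (mul_lt_of_lt_one_left hpos hr)
  rw [coeff_mul, (summable_coeff_mul_coeff a b _).tsum_eq_add_tsum_ite N,
    norm_add_eq_max_of_norm_ne_norm hlt.ne', max_eq_left hlt.le, hfN]

section Uniformizer

variable {π : L} (hπ : IsNormUniformizer π)
include hπ

theorem gaussNorm_mul (a b : OECarrier L) : gaussNorm (a * b) = gaussNorm a * gaussNorm b := by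
  rcases eq_or_ne a 0 with rfl | ha
  · rw [zero_mul, gaussNorm_zero, zero_mul]
  rcases eq_or_ne b 0 with rfl | hb
  · rw [mul_zero, gaussNorm_zero, mul_zero]
  obtain ⟨N, haN, ha'⟩ := exists_leading_coeff hπ ha
  obtain ⟨M, hbM, hb'⟩ := exists_leading_coeff hπ hb
  refine le_antisymm (gaussNorm_mul_le a b) ?_
  rw [← norm_coeff_mul_add_eq (norm_nonneg π) hπ.norm_lt_one haN ha' hbM hb'
    (mul_pos (gaussNorm_pos ha) (gaussNorm_pos hb))]
  exact norm_coeff_le_gaussNorm _ _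

theorem isDomain : IsDomain (OECarrier L) := by
  have : Nontrivial (OECarrier L) :=
    ⟨0, 1, fun h => by simpa [gaussNorm_zero, gaussNorm_one] using congrArg gaussNorm h⟩
  have : NoZeroDivisors (OECarrier L) := ⟨fun {a b} hab => by
    by_contra! h
    have hg := gaussNorm_mul hπ a b
    rw [hab, gaussNorm_zero] at hg
    exact (mul_pos (gaussNorm_pos h.1) (gaussNorm_pos h.2)).ne hg⟩
  exact NoZeroDivisors.to_isDomain _

theorem isUnit_iff_gaussNorm_eq_one {a : OECarrier L} : IsUnit a ↔ gaussNorm a = 1 := by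
  constructor
  · rintro ⟨u, rfl⟩
    have h := gaussNorm_mul hπ u ↑u⁻¹
    rw [Units.mul_inv, gaussNorm_one] at h
    nlinarith [gaussNorm_le_one (u : OECarrier L), gaussNorm_le_one (↑u⁻¹ : OECarrier L),
      gaussNorm_nonneg (u : OECarrier L)]
  · intro ha
    have ha0 : a ≠ 0 := by
      rintro rfl
      exact zero_ne_one (gaussNorm_zero.symm.trans ha)
    obtain ⟨N, hN, hlt⟩ := exists_leading_coeff hπ ha0
    rw [ha] at hN hlt
    have hc : a.1 N ≠ 0 := norm_ne_zero_iff.1 (by rw [hN]; exact one_ne_zero)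
    have hc' : ‖(a.1 N)⁻¹‖ ≤ 1 := by rw [norm_inv, hN, inv_one]
    refine isUnit_of_mul_isUnit_right (x := monomial (-N) (a.1 N)⁻¹ hc')
      (isUnit_of_coeff_zero_eq_one hπ.norm_lt_one ?_ fun n hn => ?_)
    · rw [coeff_monomial_mul, sub_neg_eq_add, zero_add, inv_mul_cancel₀ hc]
    · rw [coeff_monomial_mul, norm_mul, norm_inv, hN, inv_one, one_mul, ← mul_one ‖π‖]
      exact hlt _ (by omega)

theorem irreducible_monomial : Irreducible (monomial 0 π hπ.norm_lt_one.le) := by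
  have hg : gaussNorm (monomial 0 π hπ.norm_lt_one.le) = ‖π‖ := by
    refine le_antisymm (gaussNorm_le fun n => ?_) ?_
    · rw [coeff_monomial]
      split_ifs
      · exact le_rfl
      · exact norm_zero.trans_le (norm_nonneg π)
    · simpa [coeff_monomial] using norm_coeff_le_gaussNorm (monomial 0 π hπ.norm_lt_one.le) 0
  refine ⟨fun hu => ?_, fun a b hab => ?_⟩
  · rw [isUnit_iff_gaussNorm_eq_one hπ, hg] at hu
    exact hπ.norm_lt_one.ne hu
  simp only [isUnit_iff_gaussNorm_eq_one hπ]
  by_contra! h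
  have hab' := gaussNorm_mul hπ a b
  rw [← hab, hg] at hab'
  have ha := gaussNorm_le_of_lt_one hπ ((gaussNorm_le_one a).lt_of_ne h.1)
  have hb := gaussNorm_le_of_lt_one hπ ((gaussNorm_le_one b).lt_of_ne h.2)
  nlinarith [hπ.norm_pos, hπ.norm_lt_one, gaussNorm_nonneg a, gaussNorm_nonneg b]

theorem exists_associated_monomial_pow {a : OECarrier L} (ha : a ≠ 0) :
    ∃ k : ℕ, Associated (monomial 0 π hπ.norm_lt_one.le ^ k) a := by
  obtain ⟨N, hN⟩ := exists_norm_coeff_eq_gaussNorm hπ ha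
  obtain ⟨k, hk⟩ := hπ.exists_norm_eq_pow (norm_pos_iff.1 (hN ▸ gaussNorm_pos ha))
    (a.norm_coeff_le_one N)
  have hnorm (n : ℤ) : ‖(π ^ k)⁻¹ * a.1 n‖ = ‖a.1 n‖ / gaussNorm a := by
    rw [norm_mul, norm_inv, norm_pow, ← hk, hN, inv_mul_eq_div]
  let b : OECarrier L := ⟨fun n => (π ^ k)⁻¹ * a.1 n,
    fun n => (hnorm n).trans_le ((div_le_one (gaussNorm_pos ha)).2 (norm_coeff_le_gaussNorm a n)),
    by simpa [hnorm] using a.2.2.div_const (gaussNorm a)⟩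
  have hbN : ‖b.1 N‖ = 1 := (hnorm N).trans (by rw [hN, div_self (gaussNorm_pos ha).ne'])
  have hb : gaussNorm b = 1 :=
    le_antisymm (gaussNorm_le_one b) (hbN ▸ norm_coeff_le_gaussNorm b N)
  refine ⟨k, ((isUnit_iff_gaussNorm_eq_one hπ).2 hb).unit, ext fun n => ?_⟩
  rw [IsUnit.unit_spec, coeff_monomial_zero_pow_mul]
  exact mul_inv_cancel_left₀ (pow_ne_zero k hπ.ne_zero) (a.1 n)

end Uniformizer

end Ultrametric

end Ring

end OECarrier

/-- `O_E` (with coefficientwise addition and convolution multiplication)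
is a discrete valuation ring whose maximal ideal is generated by a uniformizer `π_L`
of `L`. -/
theorem OE_discreteValuationRing
    {L : Type*} [NontriviallyNormedField L] [CompleteSpace L] [IsUltrametricDist L]
    (πL : L) (hπ0 : πL ≠ 0) (hπ1 : ‖πL‖ < 1)
    (hπunif : ∀ x : L, x ≠ 0 → ∃ (n : ℤ) (u : L), ‖u‖ = 1 ∧ x = u * πL ^ n)
    [R : CommRing (OECarrier L)]
    (hadd : ∀ a b : OECarrier L, ∀ n : ℤ, (a + b).1 n = a.1 n + b.1 n)
    (hmul : ∀ a b : OECarrier L, ∀ n : ℤ, (a * b).1 n = ∑' i : ℤ, a.1 i * b.1 (n - i)) :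
    ∃ (hD : IsDomain (OECarrier L)),
      @IsDiscreteValuationRing (OECarrier L) R hD ∧
      ∃ πser : OECarrier L, (πser.1 = fun n => if n = 0 then πL else 0) ∧
        ∀ (hL : IsLocalRing (OECarrier L)),
          IsLocalRing.maximalIdeal (OECarrier L) = Ideal.span {πser} := by
  have : IsConvolutionRing L := ⟨hadd, hmul⟩
  have hπ : IsNormUniformizer πL := ⟨hπ0, hπ1, hπunif⟩
  have := OECarrier.isDomain hπ
  have hirr := OECarrier.irreducible_monomial hπ
  have : IsDiscreteValuationRing (OECarrier L) :=
    .ofHasUnitMulPowIrreducibleFactorization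
      ⟨_, hirr, fun hx => OECarrier.exists_associated_monomial_pow hπ hx⟩
  exact ⟨inferInstance, inferInstance, _, rfl, fun _ => hirr.maximalIdeal_eq⟩
end

section
/- Let M be a complete normed ℚ_p-module and γ a continuous linear automorphism of M with operator valuation v(γ-1) ≥ 2. Then exp(log γ) = γ, where log γ = ∑_{i≥1} (-1)^{i-1}(γ-1)^i/i and exp 𝓛 = ∑_{i≥0} 𝓛^i/i!. -/
/-!
Over a field of characteristic zero, `E = exp ∘ log(1 + X)` satisfies `(1 + X) E' = E` by the
chain rule, hence `E = 1 + X`. Put `x = γ - 1`. The polynomials `Q = exp_{<n} ∘ log_{≤m}` obtained by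
truncating both series agree with `1 + X` below degree `n` as soon as `m ≥ n`, and their
coefficients satisfy `‖coeff k Q‖ ≤ p ^ k` because `v_p(k!) ≤ k` and `v_p(k) < k`. Against
`‖x‖ ≤ p⁻²` this gives `‖Q(x) - (1 + x)‖ ≤ p ^ (-n)`. Letting `m → ∞` turns `Q(x)` into the
`n`-th partial sum of `exp (log γ)`, so these partial sums converge to `1 + x = γ`.
-/

open Filter Topology PowerSeries
open scoped Nat

namespace PowerSeries

section Truncation

variable {R : Type*} [CommRing R]

theorem coeff_pow_eq_zero_of_lt {g : R⟦X⟧} (hg : constantCoeff g = 0) {k d : ℕ} (h : k < d) :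
    coeff k (g ^ d) = 0 :=
  X_pow_dvd_iff.mp (pow_dvd_pow_of_dvd (X_dvd_iff.mpr hg) d) k h

theorem coeff_trunc_comp_trunc {f g : R⟦X⟧} (hg : constantCoeff g = 0) {n m k : ℕ}
    (hn : k < n) (hm : k < m) :
    ((trunc n f).comp (trunc m g)).coeff k = coeff k (f.subst g) := by
  have hpow (i : ℕ) : ((trunc m g) ^ i).coeff k = coeff k (g ^ i) := by
    rw [← Polynomial.coeff_coe, Polynomial.coe_pow, ← coeff_coe_trunc_of_lt hm, trunc_trunc_pow,
      coeff_coe_trunc_of_lt hm]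
  rw [Polynomial.comp, eval₂_trunc_eq_sum_range, Polynomial.finsetSum_coeff,
    coeff_subst' (HasSubst.of_constantCoeff_zero' hg),
    finsum_eq_sum_of_support_subset (s := .range n)]
  · simp only [Polynomial.coeff_C_mul, hpow, smul_eq_mul]
  · intro d hd
    contrapose! hd
    rw [Finset.coe_range, Set.mem_Iio, not_lt] at hd
    rw [Function.notMem_support, coeff_pow_eq_zero_of_lt hg (hn.trans_le hd), smul_zero]

end Truncation

theorem norm_coeff_trunc_le {R : Type*} [SeminormedRing R] (f : R⟦X⟧) (n m : ℕ) :
    ‖(trunc n f).coeff m‖ ≤ ‖coeff m f‖ := by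
  rw [coeff_trunc]
  split_ifs <;> simp

section FormalExpLog

variable {K : Type*} [Field K] [CharZero K]

theorem one_add_X_mul_derivative_log : (1 + X) * d⁄dX K (log K) = 1 := by
  ext n
  rcases n with _ | n
  · simp [deriv_log]
  · simp [deriv_log, add_mul, coeff_succ_X_mul, pow_succ]

theorem constantCoeff_subst_log (f : K⟦X⟧) :
    constantCoeff (f.subst (log K)) = constantCoeff f := by
  have h := constantCoeff_subst_eq_zero (constantCoeff_log (A := K)) (f - C (constantCoeff f))
    (by simp)
  rw [subst_sub HasSubst.log, subst_C, map_sub, sub_eq_zero] at h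
  exact h

theorem exp_subst_log : (exp K).subst (log K) = 1 + X := by
  set E := (exp K).subst (log K)
  set u := d⁄dX K (log K)
  have hu : (1 + X) * u = 1 := one_add_X_mul_derivative_log
  have hE : d⁄dX K E = E * u := by
    rw [derivative_subst HasSubst.log, derivative_exp]
  have hu' : d⁄dX K u = -u ^ 2 := by
    have h := congrArg (d⁄dX K) hu
    rw [Derivation.leibniz, Derivation.map_one_eq_zero, map_add, derivative_X,
      Derivation.map_one_eq_zero, zero_add, smul_eq_mul, smul_eq_mul] at h
    linear_combination u * h - d⁄dX K u * hu
  have hEu : E * u = 1 := by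
    refine derivative.ext ?_ ?_
    · rw [Derivation.leibniz, hE, hu', Derivation.map_one_eq_zero, smul_eq_mul, smul_eq_mul]
      ring
    · rw [map_mul, constantCoeff_subst_log]
      simp [u, deriv_log, ← coeff_zero_eq_constantCoeff_apply]
  linear_combination (1 + X) * hEu - E * hu

theorem coeff_succ_log (j : ℕ) : coeff (j + 1) (log K) = (-1) ^ j / (j + 1) := by
  simp [pow_succ]

theorem coeff_exp_eq_inv_factorial (i : ℕ) : coeff i (exp K) = (i ! : K)⁻¹ := by
  simp

theorem aeval_trunc_succ_log {A : Type*} [Ring A] [Algebra K A] (x : A) (m : ℕ) :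
    Polynomial.aeval x (trunc (m + 1) (log K)) =
      ∑ j ∈ Finset.range m, ((-1 : K) ^ j / (j + 1)) • x ^ (j + 1) := by
  rw [Polynomial.aeval_def, eval₂_trunc_eq_sum_range, Finset.sum_range_succ',
    coeff_zero_eq_constantCoeff_apply, constantCoeff_log, map_zero, zero_mul, add_zero]
  simp only [coeff_succ_log, Algebra.smul_def]

theorem aeval_trunc_exp {A : Type*} [Ring A] [Algebra K A] (y : A) (n : ℕ) :
    Polynomial.aeval y (trunc n (exp K)) = ∑ i ∈ Finset.range n, (i ! : K)⁻¹ • y ^ i := by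
  rw [Polynomial.aeval_def, eval₂_trunc_eq_sum_range]
  simp [Algebra.smul_def]

end FormalExpLog

end PowerSeries

namespace Padic

variable {p : ℕ} [Fact p.Prime]

theorem one_lt_natCast_prime : (1 : ℝ) < p := by
  exact_mod_cast (Fact.out : p.Prime).one_lt

theorem one_le_natCast_prime : (1 : ℝ) ≤ p :=
  one_lt_natCast_prime.le

theorem norm_natCast_inv {n : ℕ} (hn : n ≠ 0) :
    ‖(n : ℚ_[p])⁻¹‖ = (p : ℝ) ^ (padicValNat p n : ℤ) := by
  rw [norm_inv, norm_eq_zpow_neg_valuation (Nat.cast_ne_zero.mpr hn), valuation_natCast,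
    ← zpow_neg, neg_neg]

theorem norm_natCast_inv_le {n : ℕ} (hn : n ≠ 0) :
    ‖(n : ℚ_[p])⁻¹‖ ≤ (p : ℝ) ^ ((n : ℤ) - 1) := by
  rw [norm_natCast_inv hn]
  refine zpow_le_zpow_right₀ one_le_natCast_prime ?_
  have := (padicValNat_le_nat_log (p := p) n).trans_lt (Nat.log_lt_self p hn)
  omega

theorem norm_factorial_inv_le (n : ℕ) : ‖(n ! : ℚ_[p])⁻¹‖ ≤ (p : ℝ) ^ (n : ℤ) := by
  rw [norm_natCast_inv n.factorial_ne_zero]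
  exact zpow_le_zpow_right₀ one_le_natCast_prime (by exact_mod_cast padicValNat_factorial_le p n)

end Padic

namespace PowerSeries

variable {p : ℕ} [Fact p.Prime]

theorem norm_coeff_log_le (k : ℕ) : ‖coeff k (log ℚ_[p])‖ ≤ (p : ℝ) ^ ((k : ℤ) - 1) := by
  rcases k with _ | j
  · simp only [coeff_zero_eq_constantCoeff_apply, constantCoeff_log, norm_zero]
    positivity
  · rw [coeff_succ_log, div_eq_mul_inv, norm_mul, norm_pow, norm_neg, norm_one, one_pow, one_mul]
    exact_mod_cast Padic.norm_natCast_inv_le (p := p) j.succ_ne_zero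

theorem norm_coeff_exp_le (i : ℕ) : ‖coeff i (exp ℚ_[p])‖ ≤ (p : ℝ) ^ (i : ℤ) := by
  rw [coeff_exp_eq_inv_factorial]
  exact Padic.norm_factorial_inv_le i

end PowerSeries

theorem norm_smul_pow_le_zpow {K A : Type*} [NormedField K] [NormedRing A] [NormedAlgebra K A]
    {ρ : ℝ} (hρ : 0 < ρ) {c : K} {x : A} {a b : ℤ} {k : ℕ} (hc : ‖c‖ ≤ ρ ^ a)
    (hx : ‖x‖ ≤ ρ ^ b) (hk : 0 < k) : ‖c • x ^ k‖ ≤ ρ ^ (a + b * k) := by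
  calc ‖c • x ^ k‖ ≤ ρ ^ a * (ρ ^ b) ^ k := by
        grw [norm_smul_le, hc, norm_pow_le' x hk, hx]
    _ = ρ ^ (a + b * k) := by rw [← zpow_natCast, ← zpow_mul, ← zpow_add₀ hρ.ne']

namespace Polynomial

variable {K : Type*} [NormedField K] {ρ : ℝ}

theorem norm_coeff_pow_le [IsUltrametricDist K] (hρ : 1 ≤ ρ) {P : K[X]}
    (hP : ∀ m, ‖P.coeff m‖ ≤ ρ ^ ((m : ℤ) - 1)) (i m : ℕ) :
    ‖(P ^ i).coeff m‖ ≤ ρ ^ ((m : ℤ) - i) := by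
  induction i generalizing m with
  | zero =>
    rw [pow_zero, coeff_one]
    split_ifs
    · simpa using one_le_zpow₀ hρ (Nat.cast_nonneg m)
    · simp only [norm_zero]; positivity
  | succ i ih =>
    rw [pow_succ', coeff_mul]
    refine IsUltrametricDist.norm_sum_le_of_forall_le_of_nonneg (by positivity) ?_
    rintro ⟨a, b⟩ hab
    rw [Finset.HasAntidiagonal.mem_antidiagonal] at hab
    calc ‖P.coeff a * (P ^ i).coeff b‖ ≤ ρ ^ ((a : ℤ) - 1) * ρ ^ ((b : ℤ) - i) := by
          rw [norm_mul]; gcongr; exacts [hP a, ih b]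
      _ = ρ ^ ((m : ℤ) - (i + 1 : ℕ)) := by
          rw [← zpow_add₀ (by positivity)]; congr 1; push_cast; omega

theorem norm_coeff_comp_le [IsUltrametricDist K] (hρ : 1 ≤ ρ) {q P : K[X]}
    (hq : ∀ i, ‖q.coeff i‖ ≤ ρ ^ (i : ℤ)) (hP : ∀ m, ‖P.coeff m‖ ≤ ρ ^ ((m : ℤ) - 1)) (k : ℕ) :
    ‖(q.comp P).coeff k‖ ≤ ρ ^ (k : ℤ) := by
  rw [comp, eval₂_eq_sum_range, finsetSum_coeff]
  refine IsUltrametricDist.norm_sum_le_of_forall_le_of_nonneg (by positivity) fun i _ => ?_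
  calc ‖(C (q.coeff i) * P ^ i).coeff k‖ ≤ ρ ^ (i : ℤ) * ρ ^ ((k : ℤ) - i) := by
        rw [coeff_C_mul, norm_mul]; gcongr; exacts [hq i, norm_coeff_pow_le hρ hP i k]
    _ = ρ ^ (k : ℤ) := by rw [← zpow_add₀ (by positivity), add_sub_cancel]

theorem norm_aeval_le {A : Type*} [NormedRing A] [NormedAlgebra K A] [IsUltrametricDist A]
    (hρ : 1 ≤ ρ) {x : A} (hx : ‖x‖ ≤ ρ ^ (-2 : ℤ)) {q : K[X]} {n : ℕ} (hn : 0 < n)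
    (hq₀ : ∀ k < n, q.coeff k = 0) (hq : ∀ k, ‖q.coeff k‖ ≤ ρ ^ (k : ℤ)) :
    ‖aeval x q‖ ≤ ρ ^ (-(n : ℤ)) := by
  rw [aeval_eq_sum_range]
  refine IsUltrametricDist.norm_sum_le_of_forall_le_of_nonneg (by positivity) fun k _ => ?_
  rcases lt_or_ge k n with hk | hk
  · simp only [hq₀ k hk, zero_smul, norm_zero]; positivity
  calc ‖q.coeff k • x ^ k‖ ≤ ρ ^ ((k : ℤ) + -2 * k) :=
        norm_smul_pow_le_zpow (by positivity) (hq k) hx (by omega)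
    _ ≤ ρ ^ (-(n : ℤ)) := zpow_le_zpow_right₀ hρ (by omega)

end Polynomial

instance ContinuousLinearMap.isUltrametricDist {𝕜 E F : Type*} [NontriviallyNormedField 𝕜]
    [NormedAddCommGroup E] [NormedAddCommGroup F] [NormedSpace 𝕜 E] [NormedSpace 𝕜 F]
    [IsUltrametricDist F] : IsUltrametricDist (E →L[𝕜] F) :=
  IsUltrametricDist.isUltrametricDist_of_forall_norm_add_le_max_norm fun f g =>
    ContinuousLinearMap.opNorm_le_bound _ (by positivity) fun z =>
      calc ‖(f + g) z‖ = ‖f z + g z‖ := rfl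
        _ ≤ max ‖f z‖ ‖g z‖ := IsUltrametricDist.norm_add_le_max _ _
        _ ≤ max (‖f‖ * ‖z‖) (‖g‖ * ‖z‖) := max_le_max (f.le_opNorm z) (g.le_opNorm z)
        _ = max ‖f‖ ‖g‖ * ‖z‖ := (max_mul_of_nonneg _ _ (norm_nonneg z)).symm

theorem NonarchimedeanAddGroup.hasSum_of_tendsto_sum_range {G : Type*} [AddCommGroup G]
    [UniformSpace G] [IsUniformAddGroup G] [NonarchimedeanAddGroup G] [CompleteSpace G]
    [T2Space G] {f : ℕ → G} {a : G}
    (h : Tendsto (fun n => ∑ i ∈ Finset.range n, f i) atTop (𝓝 a)) : HasSum f a := by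
  have hf : Tendsto f atTop (𝓝 0) := by
    simpa [Finset.sum_range_succ] using (h.comp (tendsto_add_atTop_nat 1)).sub h
  rw [← Nat.cofinite_eq_atTop] at hf
  exact ((summable_of_tendsto_cofinite_zero hf).hasSum_iff_tendsto_nat).2 h

theorem tendsto_zpow_neg_natCast_atTop {ρ : ℝ} (hρ : 1 < ρ) :
    Tendsto (fun n : ℕ => ρ ^ (-(n : ℤ))) atTop (𝓝 0) := by
  simpa [zpow_neg, inv_pow] using
    tendsto_pow_atTop_nhds_zero_of_lt_one (inv_nonneg.2 (by positivity)) (inv_lt_one_of_one_lt₀ hρ)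

section ExpLog

variable {p : ℕ} [Fact p.Prime] {A : Type*} [NormedRing A] [NormedAlgebra ℚ_[p] A]
  [IsUltrametricDist A]

theorem summable_log_series [CompleteSpace A] {x : A} (hx : ‖x‖ ≤ (p : ℝ) ^ (-2 : ℤ)) :
    Summable fun j : ℕ => ((-1 : ℚ_[p]) ^ j / (j + 1)) • x ^ (j + 1) := by
  refine NonarchimedeanAddGroup.summable_of_tendsto_cofinite_zero ?_
  rw [Nat.cofinite_eq_atTop]
  refine squeeze_zero_norm (fun j => ?_)
    (tendsto_zpow_neg_natCast_atTop (Padic.one_lt_natCast_prime (p := p)))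
  calc _ ≤ (p : ℝ) ^ (((j + 1 : ℕ) : ℤ) - 1 + -2 * (j + 1 : ℕ)) := by
        rw [← coeff_succ_log]
        exact norm_smul_pow_le_zpow (zero_lt_one.trans Padic.one_lt_natCast_prime)
          (norm_coeff_log_le _) hx j.succ_pos
    _ ≤ (p : ℝ) ^ (-(j : ℤ)) := zpow_le_zpow_right₀ Padic.one_le_natCast_prime (by omega)

theorem norm_sum_range_exp_sub_one_add_le {x L : A} (hx : ‖x‖ ≤ (p : ℝ) ^ (-2 : ℤ))
    (hL : HasSum (fun j : ℕ => ((-1 : ℚ_[p]) ^ j / (j + 1)) • x ^ (j + 1)) L) {n : ℕ}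
    (hn : 0 < n) :
    ‖∑ i ∈ Finset.range n, (i ! : ℚ_[p])⁻¹ • L ^ i - (1 + x)‖ ≤ (p : ℝ) ^ (-(n : ℤ)) := by
  set Q : ℕ → Polynomial ℚ_[p] := fun m => (trunc n (exp ℚ_[p])).comp (trunc (m + 1) (log ℚ_[p]))
  have hQ (m : ℕ) (hm : n ≤ m) :
      ‖Polynomial.aeval x (Q m) - (1 + x)‖ ≤ (p : ℝ) ^ (-(n : ℤ)) := by
    have := Polynomial.norm_aeval_le Padic.one_le_natCast_prime hx hn
      (q := Q m - (1 + Polynomial.X)) ?_ ?_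
    · simpa using this
    · intro k hk
      rw [Polynomial.coeff_sub, coeff_trunc_comp_trunc constantCoeff_log hk (by omega),
        exp_subst_log]
      simp [PowerSeries.coeff_X, Polynomial.coeff_X, Polynomial.coeff_one, eq_comm]
    · intro k
      rw [Polynomial.coeff_sub, sub_eq_add_neg]
      refine (IsUltrametricDist.norm_add_le_max _ _).trans (max_le ?_ ?_)
      · exact Polynomial.norm_coeff_comp_le Padic.one_le_natCast_prime
          (fun i => (norm_coeff_trunc_le _ _ _).trans (norm_coeff_exp_le i))
          (fun i => (norm_coeff_trunc_le _ _ _).trans (norm_coeff_log_le i)) k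
      · have h1X : ‖(1 + Polynomial.X : Polynomial ℚ_[p]).coeff k‖ ≤ 1 := by
          rcases k with _ | _ | k <;> simp [Polynomial.coeff_one, Polynomial.coeff_X]
        rw [norm_neg]
        exact h1X.trans (one_le_zpow₀ Padic.one_le_natCast_prime (Nat.cast_nonneg k))
  have hlim : Tendsto (fun m => Polynomial.aeval x (Q m)) atTop
      (𝓝 (∑ i ∈ Finset.range n, (i ! : ℚ_[p])⁻¹ • L ^ i)) := by
    simp only [Q, Polynomial.aeval_comp, aeval_trunc_succ_log, ← aeval_trunc_exp]
    exact ((Polynomial.continuous_aeval _).tendsto L).comp hL.tendsto_sum_nat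
  exact le_of_tendsto ((continuous_norm.tendsto _).comp (hlim.sub_const (1 + x)))
    (eventually_atTop.2 ⟨n, hQ⟩)

end ExpLog

theorem exp_log_eq_self_general
    (p : ℕ) [Fact p.Prime]
    {M : Type*} [NormedAddCommGroup M] [NormedSpace ℚ_[p] M] [CompleteSpace M]
    [IsUltrametricDist M]
    (γ : M →L[ℚ_[p]] M)
    (hγ : ∀ x : M, ‖(γ - 1) x‖ ≤ (p : ℝ) ^ (-2 : ℤ) * ‖x‖) :
    ∑' i : ℕ, ((i.factorial : ℚ_[p])⁻¹) •
        (∑' j : ℕ, ((-1 : ℚ_[p]) ^ j / (j + 1)) • (γ - 1) ^ (j + 1)) ^ i = γ := by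
  have hx : ‖γ - 1‖ ≤ (p : ℝ) ^ (-2 : ℤ) :=
    ContinuousLinearMap.opNorm_le_bound _ (by positivity) hγ
  set L := ∑' j : ℕ, ((-1 : ℚ_[p]) ^ j / (j + 1)) • (γ - 1) ^ (j + 1)
  have hpartial : ∀ᶠ n in atTop,
      ‖∑ i ∈ Finset.range n, (i ! : ℚ_[p])⁻¹ • L ^ i - (1 + (γ - 1))‖ ≤ (p : ℝ) ^ (-(n : ℤ)) :=
    (eventually_gt_atTop 0).mono fun n hn =>
      norm_sum_range_exp_sub_one_add_le hx (summable_log_series hx).hasSum hn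
  have hexp := NonarchimedeanAddGroup.hasSum_of_tendsto_sum_range <|
    tendsto_iff_norm_sub_tendsto_zero.2 <| squeeze_zero' (.of_forall fun _ => norm_nonneg _)
      hpartial (tendsto_zpow_neg_natCast_atTop Padic.one_lt_natCast_prime)
  rw [hexp.tsum_eq, add_sub_cancel]

/-- for a continuous linear automorphism `γ` of a complete normed
`ℚ_p`-module with `v(γ - 1) ≥ 2`, one has `exp (log γ) = γ`, where
`log γ = ∑_{i≥1} (-1)^{i-1}(γ-1)^i/i` and `exp 𝓛 = ∑_{i≥0} 𝓛^i/i!`. -/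
theorem exp_log_eq_self
    (p : ℕ) [Fact p.Prime]
    {M : Type*} [NormedAddCommGroup M] [NormedSpace ℚ_[p] M] [CompleteSpace M]
    [IsUltrametricDist M]
    (γ : M →L[ℚ_[p]] M) (hγunit : IsUnit γ)
    (hγ : ∀ x : M, ‖(γ - 1) x‖ ≤ (p : ℝ) ^ (-2 : ℤ) * ‖x‖) :
    ∑' i : ℕ, ((i.factorial : ℚ_[p])⁻¹) •
        (∑' j : ℕ, ((-1 : ℚ_[p]) ^ j / (j + 1)) • (γ - 1) ^ (j + 1)) ^ i = γ :=
  exp_log_eq_self_general p γ hγ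
end

section
/- Let M be a complete normed ℚ_p-module and γ an automorphism with operator valuation v(γ-1) ≥ 2, so that log γ is defined. Then for every x ∈ M, (log γ)(x) = lim_{n→∞} (γ^{p^n} x - x)/p^n. -/
/-!
Put `δ = γ - 1` and `N = pⁿ`. By the binomial theorem `(γ^N - 1)/N = ∑ₖ (C(N, k+1)/N) δ^(k+1)`,
and `C(N, k+1)/N = (N-1)(N-2)⋯(N-k)/(k+1)!` is a polynomial in `N`, so it tends to
`(-1)^k/(k+1)` as `N → 0` in `ℚ_p`. These coefficients are bounded by `k + 1` because
`|1/(k+1)|_p ≤ k + 1`, so for `‖δ‖ < 1` Tannery's theorem lets the limit pass through the series,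
even in operator norm.
-/

open Filter Topology Polynomial Nat

namespace Padic

variable {p : ℕ} [Fact p.Prime]

theorem inv_norm_natCast_le {n : ℕ} (hn : n ≠ 0) : ‖(n : ℚ_[p])‖⁻¹ ≤ n := by
  rw [norm_eq_zpow_neg_valuation (Nat.cast_ne_zero.2 hn), valuation_natCast, zpow_neg, inv_inv,
    zpow_natCast]
  exact_mod_cast Nat.le_of_dvd (Nat.pos_of_ne_zero hn) pow_padicValNat_dvd

theorem norm_choose_succ_div_le {N : ℕ} (hN : N ≠ 0) (k : ℕ) :
    ‖(N.choose (k + 1) : ℚ_[p]) / N‖ ≤ k + 1 := by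
  obtain ⟨m, rfl⟩ := Nat.exists_eq_add_one_of_ne_zero hN
  have hk : ((k + 1 : ℕ) : ℚ_[p]) ≠ 0 := Nat.cast_ne_zero.2 k.succ_ne_zero
  have hchoose : ((m + 1).choose (k + 1) : ℚ_[p]) / (m + 1 : ℕ) = m.choose k / (k + 1 : ℕ) := by
    rw [div_eq_div_iff (Nat.cast_ne_zero.2 hN) hk]
    exact_mod_cast (Nat.add_one_mul_choose_eq m k).symm.trans (mul_comm _ _)
  rw [hchoose, norm_div]
  calc ‖(m.choose k : ℚ_[p])‖ / ‖((k + 1 : ℕ) : ℚ_[p])‖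
      ≤ 1 * ‖((k + 1 : ℕ) : ℚ_[p])‖⁻¹ := by
        rw [div_eq_mul_inv]
        gcongr
        exact_mod_cast norm_int_le_one (m.choose k)
    _ ≤ k + 1 := by simpa using inv_norm_natCast_le (p := p) k.succ_ne_zero

end Padic

theorem descPochhammer_eval_neg_one (R : Type*) [Ring R] (k : ℕ) :
    (descPochhammer R k).eval (-1) = (-1) ^ k * k ! := by
  have h := ascPochhammer_eval_neg_eq_descPochhammer R (-1) k
  rw [neg_neg, ascPochhammer_eval_one] at h
  rw [h, ← mul_assoc, ← pow_add, ← two_mul, pow_mul, neg_one_sq, one_pow, one_mul]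

theorem choose_succ_div_eq_descPochhammer_eval {K : Type*} [Field K] [CharZero K] {N : ℕ}
    (hN : N ≠ 0) (k : ℕ) :
    (N.choose (k + 1) : K) / N = (descPochhammer K k).eval ((N : K) - 1) / (k + 1)! := by
  have hdesc :
      ((k + 1)! * N.choose (k + 1) : ℕ) = (N : K) * (descPochhammer K k).eval ((N : K) - 1) := by
    rw [← Nat.descFactorial_eq_factorial_mul_choose, ← descPochhammer_eval_eq_descFactorial,
      descPochhammer_succ_left]
    simp
  rw [div_eq_div_iff (Nat.cast_ne_zero.2 hN) (Nat.cast_ne_zero.2 (Nat.factorial_ne_zero _))]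
  push_cast at hdesc
  linear_combination hdesc

theorem tendsto_choose_succ_div {ι K : Type*} [NormedField K] [CharZero K] {l : Filter ι}
    {N : ι → ℕ} (hN : ∀ᶠ i in l, N i ≠ 0) (hlim : Tendsto (fun i ↦ (N i : K)) l (𝓝 0)) (k : ℕ) :
    Tendsto (fun i ↦ ((N i).choose (k + 1) : K) / N i) l (𝓝 ((-1) ^ k / (k + 1))) := by
  have hval : (descPochhammer K k).eval ((0 : K) - 1) / (k + 1)! = (-1) ^ k / (k + 1) := by
    rw [zero_sub, descPochhammer_eval_neg_one, Nat.factorial_succ, Nat.cast_mul,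
      mul_div_mul_right _ _ (Nat.cast_ne_zero.2 (Nat.factorial_ne_zero k))]
    push_cast
    ring
  have hcont : Continuous fun t : K ↦ (descPochhammer K k).eval (t - 1) / (k + 1)! := by
    fun_prop
  refine hval ▸ ((hcont.tendsto 0).comp hlim).congr' ?_
  filter_upwards [hN] with i hi
  exact (choose_succ_div_eq_descPochhammer_eval hi k).symm

theorem one_add_pow_sub_one {R : Type*} [Ring R] (a : R) (N : ℕ) :
    (1 + a) ^ N - 1 = ∑ k ∈ Finset.range N, N.choose (k + 1) • a ^ (k + 1) := by
  rw [add_comm, (Commute.one_right a).add_pow, Finset.sum_range_succ', add_sub_assoc]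
  simp [nsmul_eq_mul, Nat.cast_comm]

section

variable (p : ℕ) [Fact p.Prime] {A : Type*} [NormedRing A] [NormedSpace ℚ_[p] A]

theorem inv_smul_one_add_pow_sub_one_eq_tsum (a : A) (n : ℕ) :
    ((p : ℚ_[p]) ^ n)⁻¹ • ((1 + a) ^ p ^ n - 1)
      = ∑' k, (((p ^ n).choose (k + 1) : ℚ_[p]) / (p ^ n : ℕ)) • a ^ (k + 1) := by
  rw [one_add_pow_sub_one, tsum_eq_sum (s := Finset.range (p ^ n)), Finset.smul_sum]
  · refine Finset.sum_congr rfl fun k _ ↦ ?_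
    rw [← Nat.cast_smul_eq_nsmul ℚ_[p], smul_smul, Nat.cast_pow, div_eq_inv_mul]
  · intro k hk
    rw [Nat.choose_eq_zero_of_lt (by simp at hk; omega), Nat.cast_zero, zero_div, zero_smul]

theorem tendsto_inv_smul_one_add_pow_sub_one [CompleteSpace A] {a : A} (ha : ‖a‖ < 1) :
    Tendsto (fun n : ℕ ↦ ((p : ℚ_[p]) ^ n)⁻¹ • ((1 + a) ^ p ^ n - 1)) atTop
      (𝓝 (∑' j : ℕ, ((-1 : ℚ_[p]) ^ j / (j + 1)) • a ^ (j + 1))) := by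
  simp_rw [inv_smul_one_add_pow_sub_one_eq_tsum]
  have hp : p ≠ 0 := (Fact.out : p.Prime).ne_zero
  refine tendsto_tsum_of_dominated_convergence
    (f := fun n k ↦ (((p ^ n).choose (k + 1) : ℚ_[p]) / (p ^ n : ℕ)) • a ^ (k + 1))
    (bound := fun k ↦ (k + 1 : ℝ) * ‖a‖ ^ (k + 1)) ?_ (fun k ↦ ?_) (.of_forall fun n k ↦ ?_)
  · have := summable_pow_mul_geometric_of_norm_lt_one 1 (r := ‖a‖) (by rwa [norm_norm])
    simpa using (summable_nat_add_iff (f := fun n : ℕ ↦ (n : ℝ) ^ 1 * ‖a‖ ^ n) 1).2 this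
  · refine (tendsto_choose_succ_div (.of_forall fun n ↦ pow_ne_zero n hp) ?_ k).smul_const _
    simpa using tendsto_pow_atTop_nhds_zero_of_norm_lt_one (Padic.norm_p_lt_one (p := p))
  · rw [norm_smul]
    gcongr
    · exact Padic.norm_choose_succ_div_le (pow_ne_zero n hp) k
    · exact norm_pow_le' a k.succ_pos

end

theorem log_eq_lim_general
    (p : ℕ) [Fact p.Prime]
    {M : Type*} [NormedAddCommGroup M] [NormedSpace ℚ_[p] M] [CompleteSpace M]
    (γ : M →L[ℚ_[p]] M)
    (hγ : ∀ x : M, ‖(γ - 1) x‖ ≤ (p : ℝ) ^ (-2 : ℤ) * ‖x‖) (x : M) :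
    Tendsto (fun n : ℕ => ((p : ℚ_[p]) ^ n)⁻¹ • ((γ ^ (p ^ n)) x - x)) atTop
      (nhds ((∑' j : ℕ, ((-1 : ℚ_[p]) ^ j / (j + 1)) • (γ - 1) ^ (j + 1)) x)) := by
  have hp : (1 : ℝ) < p := mod_cast (Fact.out : p.Prime).one_lt
  have hδ : ‖γ - 1‖ < 1 :=
    (ContinuousLinearMap.opNorm_le_bound _ (by positivity) hγ).trans_lt
      (zpow_lt_one_of_neg₀ hp (by norm_num))
  have h := tendsto_inv_smul_one_add_pow_sub_one p hδ
  rw [add_sub_cancel] at h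
  simpa only [Function.comp_def, map_smul, ContinuousLinearMap.apply_apply, sub_apply,
    one_apply_eq_self] using ((ContinuousLinearMap.apply ℚ_[p] M x).continuous.tendsto _).comp h

/-- for `γ` an automorphism of a complete normed `ℚ_p`-module with
`v(γ-1) ≥ 2` (so that `log γ` is defined), for every `x`,
`(log γ)(x) = lim_{n→∞} (γ^{pⁿ} x - x)/pⁿ`. -/
theorem log_eq_lim
    (p : ℕ) [Fact p.Prime]
    {M : Type*} [NormedAddCommGroup M] [NormedSpace ℚ_[p] M] [CompleteSpace M]
    [IsUltrametricDist M]
    (γ : M →L[ℚ_[p]] M) (hγunit : IsUnit γ)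
    (hγ : ∀ x : M, ‖(γ - 1) x‖ ≤ (p : ℝ) ^ (-2 : ℤ) * ‖x‖) (x : M) :
    Tendsto (fun n : ℕ => ((p : ℚ_[p]) ^ n)⁻¹ • ((γ ^ (p ^ n)) x - x)) atTop
      (nhds ((∑' j : ℕ, ((-1 : ℚ_[p]) ^ j / (j + 1)) • (γ - 1) ^ (j + 1)) x)) :=
  log_eq_lim_general p γ hγ x
end
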